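/- Suppose A, B ∈ GL_n(ℂ) satisfy A⁻¹B⁻¹AB = ζ·I_n where ζ = e^{2πid/n} is a primitive n-th root of unity (i.e. gcd(n,d)=1). Then any subspace V ⊆ ℂⁿ invariant under both A and B is either 0 or all of ℂⁿ; that is, the pair (A,B) acts irreducibly on ℂⁿ. -/

import Mathlib

open Matrix

/-- If A⁻¹B⁻¹AB = ζ·I_n with ζ a primitive n-th root of unity, then the pair
(A,B) acts irreducibly on ℂⁿ: every subspace invariant under A and B is 0 or ℂⁿ. -/
theorem stmt5 (n : ℕ) (hn : 1 ≤ n) (A B : Matrix (Fin n) (Fin n) ℂ)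
    (hA : IsUnit A.det) (hB : IsUnit B.det)
    (ζ : ℂ) (hζ : IsPrimitiveRoot ζ n)
    (hrel : A⁻¹ * B⁻¹ * A * B = ζ • (1 : Matrix (Fin n) (Fin n) ℂ))
    (V : Submodule ℂ (Fin n → ℂ))
    (hVA : ∀ v ∈ V, A.mulVec v ∈ V) (hVB : ∀ v ∈ V, B.mulVec v ∈ V) :
    V = ⊥ ∨ V = ⊤ := by
  by_cases hV : V = ⊥
  · exact Or.inl hV
  right
  have hζ0 : ζ ≠ 0 := hζ.ne_zero (by omega)
  -- derive B * A = ζ⁻¹ • (A * B)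
  have hAB : A * B = ζ • (B * A) := by
    have h1 : A * (A⁻¹ * B⁻¹ * A * B) = ζ • A := by
      rw [hrel, Matrix.mul_smul, mul_one]
    have h2 : A * (A⁻¹ * B⁻¹ * A * B) = B⁻¹ * (A * B) := by
      rw [show A⁻¹ * B⁻¹ * A * B = A⁻¹ * (B⁻¹ * (A * B)) by rw [mul_assoc, mul_assoc],
        ← mul_assoc, Matrix.mul_nonsing_inv _ hA, one_mul]
    have h3 : B * (B⁻¹ * (A * B)) = B * (ζ • A) := by rw [← h2, h1]
    rw [← mul_assoc, Matrix.mul_nonsing_inv _ hB, one_mul, Matrix.mul_smul] at h3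
    exact h3
  have hBA : B * A = ζ⁻¹ • (A * B) := by
    rw [hAB, smul_smul, inv_mul_cancel₀ hζ0, one_smul]
  -- V is nontrivial and finite-dimensional; find an eigenvector of B in V
  haveI : Nontrivial V := Submodule.nontrivial_iff_ne_bot.mpr hV
  set g : Module.End ℂ V := (Matrix.mulVecLin B).restrict
    (fun x hx => hVB x hx) with hg
  obtain ⟨μ, hμ⟩ := Module.End.exists_eigenvalue g
  obtain ⟨⟨v, hvV⟩, hvg, hv0⟩ := hμ.exists_hasEigenvector
  have hv : v ≠ 0 := fun h => hv0 (Subtype.ext h)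
  have hBv : B.mulVec v = μ • v := by
    have := congrArg (Subtype.val) ((Module.End.mem_eigenspace_iff).mp hvg)
    exact this
  have hμ0 : μ ≠ 0 := by
    rintro rfl
    apply hv
    have hBinj : Function.Injective B.mulVec := by
      intro x y hxy
      have := congrArg (B⁻¹.mulVec) hxy
      simpa [Matrix.mulVec_mulVec, Matrix.nonsing_inv_mul _ hB] using this
    apply hBinj
    simpa using hBv
  -- the vectors A^k v are eigenvectors of B with eigenvalue ζ⁻¹^k * μ
  have key : ∀ k : ℕ, B.mulVec ((A ^ k).mulVec v) = (ζ⁻¹ ^ k * μ) • (A ^ k).mulVec v := by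
    intro k
    induction k with
    | zero => simpa using hBv
    | succ k ih =>
      have e1 : (A ^ (k + 1)).mulVec v = A.mulVec ((A ^ k).mulVec v) := by
        rw [Matrix.mulVec_mulVec, pow_succ']
      rw [e1, Matrix.mulVec_mulVec, hBA, Matrix.smul_mulVec,
        ← Matrix.mulVec_mulVec, ih, Matrix.mulVec_smul, smul_smul,
        Matrix.mulVec_mulVec, ← pow_succ']
      congr 1
      ring
  have hmemV : ∀ k : ℕ, (A ^ k).mulVec v ∈ V := by
    intro k
    induction k with
    | zero => simpa using hvV
    | succ k ih =>
      have : (A ^ (k + 1)).mulVec v = A.mulVec ((A ^ k).mulVec v) := by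
        rw [Matrix.mulVec_mulVec, pow_succ']
      rw [this]
      exact hVA _ ih
  have hne : ∀ k : ℕ, (A ^ k).mulVec v ≠ 0 := by
    intro k h
    apply hv
    have hAk : IsUnit (A ^ k).det := by
      rw [Matrix.det_pow]; exact hA.pow k
    have := congrArg ((A ^ k)⁻¹.mulVec) h
    simpa [Matrix.mulVec_mulVec, Matrix.nonsing_inv_mul _ hAk] using this
  -- eigenvalues are distinct
  have hinj : Function.Injective (fun k : Fin n => ζ⁻¹ ^ (k : ℕ) * μ) := by
    intro i j hij
    have hζinv : IsPrimitiveRoot ζ⁻¹ n := hζ.inv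
    have : ζ⁻¹ ^ (i : ℕ) = ζ⁻¹ ^ (j : ℕ) :=
      mul_right_cancel₀ hμ0 hij
    exact Fin.ext (hζinv.pow_inj i.isLt j.isLt this)
  -- linear independence of the family in V
  have hli : LinearIndependent ℂ (fun k : Fin n => ((A ^ (k : ℕ)).mulVec v)) := by
    apply Module.End.eigenvectors_linearIndependent' (Matrix.mulVecLin B)
      (fun k : Fin n => ζ⁻¹ ^ (k : ℕ) * μ) hinj
    intro k
    constructor
    · rw [Module.End.mem_eigenspace_iff]
      simpa using key k
    · exact hne k
  have hliV : LinearIndependent ℂ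
      (fun k : Fin n => (⟨(A ^ (k : ℕ)).mulVec v, hmemV k⟩ : V)) := by
    apply LinearIndependent.of_comp V.subtype
    exact hli
  have hcard : n ≤ Module.finrank ℂ V := by
    simpa using hliV.fintype_card_le_finrank
  have hle : Module.finrank ℂ V ≤ n := by
    have := Submodule.finrank_le V
    simpa [Module.finrank_fin_fun] using this
  exact Submodule.eq_top_of_finrank_eq (by
    rw [Module.finrank_fin_fun]; omega)
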